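/- (Generalized Watts theorem, essential surjectivity) Let A be a cocomplete k-linear abelian category and F : Mod R → A a k-linear right exact functor commuting with direct sums. Set 𝓕 = F(R) with left R-module structure ρ(x) = F(μ_x). Then F is naturally isomorphic to − ⊗_R 𝓕, where − ⊗_R 𝓕 denotes the left adjoint of Hom_A(𝓕, −) : A → Mod R. -/

import Mathlib

open CategoryTheory CategoryTheory.Limits MulOpposite

universe u

section Preamble

variable (k : Type*) [CommRing k] (R : Type u) [Ring R] [Algebra k R]
variable (A : Type*) [Category.{u} A] [Preadditive A] [CategoryTheory.Linear k A]

/-- A left `R`-module in the `k`-linear category `A`: an object together with a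
ring homomorphism `ρ : R → End 𝓕` which is `k`-linear, i.e. a `k`-algebra homomorphism. -/
structure LMod where
  X : A
  ρ : R →+* End X
  algebraMap_smul' : ∀ a : k, ρ (algebraMap k R a) = a • (𝟙 X)

variable {k R A}

/-- the `k`-module structure on right `R`-modules obtained by restriction of scalars -/
noncomputable instance (M : ModuleCat.{u} Rᵐᵒᵖ) : Module k M :=
  RestrictScalars.module k Rᵐᵒᵖ M

instance (M : ModuleCat.{u} Rᵐᵒᵖ) : IsScalarTower k Rᵐᵒᵖ M :=
  RestrictScalars.isScalarTower k Rᵐᵒᵖ M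

/-- The `k`-linear structure on the category of right `R`-modules, `a • m = m · γ(a)`. -/
noncomputable instance : CategoryTheory.Linear k (ModuleCat.{u} Rᵐᵒᵖ) where
  homModule _ _ := ModuleCat.Hom.instModule
  smul_comp := by
    intros
    ext
    dsimp only [ModuleCat.hom_comp, ModuleCat.hom_smul, LinearMap.comp_apply]
    rw [LinearMap.smul_apply, LinearMap.smul_apply, LinearMap.map_smul_of_tower]
    rfl

/-- `Hom_A(𝓕, N)` is a right `R`-module via `α · r := ρ(r) ≫ α`. -/
instance homRMod (F : LMod k R A) (N : A) : Module Rᵐᵒᵖ (F.X ⟶ N) where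
  smul r α := F.ρ r.unop ≫ α
  one_smul α := by show F.ρ _ ≫ α = α; simp
  mul_smul r s α := by
    show F.ρ _ ≫ α = F.ρ _ ≫ F.ρ _ ≫ α
    rw [unop_mul, map_mul, End.mul_def, Category.assoc]
  smul_zero r := by show _ ≫ (0 : F.X ⟶ N) = 0; simp
  smul_add r α β := by show _ ≫ (α + β) = _ ≫ α + _ ≫ β; simp
  add_smul r s α := by
    show F.ρ _ ≫ α = F.ρ _ ≫ α + F.ρ _ ≫ α
    rw [MulOpposite.unop_add, map_add]; exact Preadditive.add_comp _ _ _ _ _ _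
  zero_smul α := by show F.ρ _ ≫ α = 0; rw [MulOpposite.unop_zero, map_zero]; exact Limits.zero_comp

lemma homRMod_smul_def (F : LMod k R A) {N : A} (r : Rᵐᵒᵖ) (α : F.X ⟶ N) :
    r • α = F.ρ r.unop ≫ α := rfl

/-- The functor `Hom_A(𝓕, -) : A ⥤ Mod R`. -/
noncomputable def homFunctor (F : LMod k R A) : A ⥤ ModuleCat.{u} Rᵐᵒᵖ where
  obj N := ModuleCat.of Rᵐᵒᵖ (F.X ⟶ N)
  map {N N'} f := ModuleCat.ofHom
    { toFun := fun α => α ≫ f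
      map_add' := fun α β => Preadditive.add_comp _ _ _ _ _ _
      map_smul' := fun r α => by
        show (F.ρ r.unop ≫ α) ≫ f = F.ρ r.unop ≫ (α ≫ f)
        rw [Category.assoc] }
  map_id N := by ext α; exact Category.comp_id α
  map_comp f g := by ext α; exact (Category.assoc _ _ _).symm

/-- `R` as a right module over itself. -/
noncomputable abbrev RR : ModuleCat.{u} Rᵐᵒᵖ := ModuleCat.of Rᵐᵒᵖ Rᵐᵒᵖ

variable (R) in
/-- left multiplication `μ_x` by `x` on `R`, a right `R`-module map -/
def mulMap (x : R) : (RR : ModuleCat.{u} Rᵐᵒᵖ) ⟶ RR := ModuleCat.ofHom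
  { toFun := fun r => op (x * r.unop)
    map_add' := fun r s => by
      apply unop_injective
      show x * (r + s).unop = _
      rw [show (r + s).unop = r.unop + s.unop from rfl, mul_add]; rfl
    map_smul' := fun s t => by
      apply unop_injective
      show x * (s • t).unop = ((s • op (x * t.unop)).unop)
      rw [show (s • t).unop = t.unop * s.unop from rfl,
        show (s • op (x * t.unop)).unop = (x * t.unop) * s.unop from rfl, mul_assoc] }

/-- Morphisms `𝓕 → 𝓖` of left `R`-modules in `A` induce natural transformations
`Hom_A(𝓖,-) ⟶ Hom_A(𝓕,-)`. -/
noncomputable def homPre {F G : LMod k R A} (φ : F.X ⟶ G.X)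
    (h : ∀ r : R, F.ρ r ≫ φ = φ ≫ G.ρ r) : homFunctor G ⟶ homFunctor F where
  app N := ModuleCat.ofHom
    { toFun := fun α => φ ≫ α
      map_add' := fun α β => Preadditive.comp_add _ _ _ _ _ _
      map_smul' := fun r α => by
        show φ ≫ G.ρ r.unop ≫ α = F.ρ r.unop ≫ φ ≫ α
        rw [← Category.assoc, ← h, Category.assoc] }
  naturality N N' f := by ext α; exact (Category.assoc _ _ _).symm

/-- `M ⊗ φ` : the natural transformation `- ⊗_R 𝓕 ⟶ - ⊗_R 𝓖` induced by `φ : 𝓕 ⟶ 𝓖`,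
obtained as the conjugate (mate) of `homPre φ`. -/
noncomputable def tensorMap {F G : LMod k R A} {TF TG : ModuleCat.{u} Rᵐᵒᵖ ⥤ A}
    (adjF : TF ⊣ homFunctor F) (adjG : TG ⊣ homFunctor G) (φ : F.X ⟶ G.X)
    (h : ∀ r : R, F.ρ r ≫ φ = φ ≫ G.ρ r) : TF ⟶ TG :=
  (conjugateEquiv adjG adjF).symm (homPre φ h)

/-- The canonical map `ξ_𝓕 : 𝓕 ⟶ R ⊗_R 𝓕`. -/
noncomputable def xi {F : LMod k R A} {TF : ModuleCat.{u} Rᵐᵒᵖ ⥤ A}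
    (adjF : TF ⊣ homFunctor F) : F.X ⟶ TF.obj RR :=
  (adjF.unit.app RR).hom (1 : Rᵐᵒᵖ)

end Preamble

/-! The map `M → Hom_A(F R, F M)`, `m ↦ F(r ↦ m r)`, is `R`-linear because `ρ x = F(μ_x)`,
and natural in `M`; its adjoint is a natural transformation `θ : T ⟶ F`. Evaluating at
`1 ∈ R` identifies `α ↦ θ_R ≫ α` with the inverse of the adjunction bijection
`Hom(T R, N) ≃ Hom_R(R, Hom(F R, N)) ≃ Hom(F R, N)`, so `θ_R` is an isomorphism. Both `T`, a
left adjoint, and `F` preserve direct sums and cokernels, and every module is the cokernel of a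
map between free modules, so `θ` is an isomorphism. -/

namespace ModuleCat

variable {S : Type u} [Ring S]

noncomputable def spanSingletonHom (M : ModuleCat.{u} S) (m : M) : of S S ⟶ M :=
  ofHom (LinearMap.toSpanSingleton S M m)

lemma spanSingletonHom_comp {M N : ModuleCat.{u} S} (m : M) (f : M ⟶ N) :
    spanSingletonHom M m ≫ f = spanSingletonHom N (f m) :=
  hom_ext (LinearMap.comp_toSpanSingleton f.hom m)

lemma spanSingletonHom_add (M : ModuleCat.{u} S) (m n : M) :
    spanSingletonHom M (m + n) = spanSingletonHom M m + spanSingletonHom M n :=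
  hom_ext (LinearMap.toSpanSingleton_add m n)

lemma spanSingletonHom_self_one : spanSingletonHom (of S S) 1 = 𝟙 _ :=
  hom_ext (LinearMap.ext fun s => mul_one s)

lemma isSeparator_self : IsSeparator (of S S) :=
  (isSeparator_def _).2 fun M _ f g h => hom_ext <| LinearMap.ext fun m => by
    have hm := h (spanSingletonHom M m)
    rw [spanSingletonHom_comp, spanSingletonHom_comp] at hm
    simpa [spanSingletonHom] using congr($hm (1 : S))

noncomputable def freeCover (M : ModuleCat.{u} S) :
    ∐ (fun _ : of S S ⟶ M => of S S) ⟶ M :=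
  Sigma.desc fun f => f

instance (M : ModuleCat.{u} S) : Epi (freeCover M) :=
  (isSeparator_iff_epi _).1 isSeparator_self M

noncomputable def freePresentation (M : ModuleCat.{u} S) :
    ∐ (fun _ : of S S ⟶ kernel (freeCover M) => of S S) ⟶
      ∐ (fun _ : of S S ⟶ M => of S S) :=
  freeCover (kernel (freeCover M)) ≫ kernel.ι (freeCover M)

lemma freePresentation_comp_freeCover (M : ModuleCat.{u} S) :
    freePresentation M ≫ freeCover M = 0 := by
  simp [freePresentation]

noncomputable def isCokernelFreePresentation (M : ModuleCat.{u} S) :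
    IsColimit (CokernelCofork.ofπ _ (freePresentation_comp_freeCover M)) :=
  -- The `Epi` instance only matches after unfolding instances, so it is passed explicitly.
  isCokernelEpiComp (Abelian.epiIsCokernelOfKernel _ (kernelIsKernel (freeCover M)))
    (hg := (inferInstance : Epi (freeCover (kernel (freeCover M))))) _ rfl

variable {A : Type*} [Category A] {T F : ModuleCat.{u} S ⥤ A}

lemma isIso_app_sigma_self (θ : T ⟶ F) [IsIso (θ.app (of S S))] (ι : Type u)
    [PreservesColimitsOfShape (Discrete ι) T] [PreservesColimitsOfShape (Discrete ι) F] :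
    IsIso (θ.app (∐ fun _ : ι => of S S)) :=
  have : IsIso (Functor.whiskerLeft (Discrete.functor fun _ : ι => of S S) θ) :=
    have (j : Discrete ι) : IsIso
        ((Functor.whiskerLeft (Discrete.functor fun _ : ι => of S S) θ).app j) := ‹_›
    NatIso.isIso_of_isIso_app _
  isIso_app_coconePt_of_preservesColimit _ θ _ (colimit.isColimit _)

lemma isIso_natTrans_of_isIso_app_self (θ : T ⟶ F) [IsIso (θ.app (of S S))]
    [∀ ι : Type u, PreservesColimitsOfShape (Discrete ι) T]
    [∀ ι : Type u, PreservesColimitsOfShape (Discrete ι) F]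
    [PreservesColimitsOfShape WalkingParallelPair T]
    [PreservesColimitsOfShape WalkingParallelPair F] : IsIso θ := by
  have (M : ModuleCat.{u} S) : IsIso (θ.app M) := by
    have : IsIso (Functor.whiskerLeft (parallelPair (freePresentation M) 0) θ) := by
      have (j : WalkingParallelPair) :
          IsIso ((Functor.whiskerLeft (parallelPair (freePresentation M) 0) θ).app j) := by
        cases j <;> exact isIso_app_sigma_self θ _
      exact NatIso.isIso_of_isIso_app _
    exact isIso_app_coconePt_of_preservesColimit _ θ _ (isCokernelFreePresentation M)
  exact NatIso.isIso_of_isIso_app θ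

end ModuleCat

section Watts

variable {k : Type*} [CommRing k] {R : Type u} [Ring R] [Algebra k R]
  {A : Type*} [Category.{u} A] [Preadditive A] [CategoryTheory.Linear k A]

lemma mulMap_comp_spanSingletonHom {M : ModuleCat.{u} Rᵐᵒᵖ} (x : R) (m : M) :
    mulMap R x ≫ ModuleCat.spanSingletonHom M m = ModuleCat.spanSingletonHom M (op x • m) :=
  ModuleCat.hom_ext <| LinearMap.ext fun r => mul_smul r (op x) m

variable (F : ModuleCat.{u} Rᵐᵒᵖ ⥤ A) (ρ : R →+* End (F.obj (RR : ModuleCat.{u} Rᵐᵒᵖ)))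
  (halg : ∀ a : k, ρ (algebraMap k R a) = a • 𝟙 (F.obj (RR : ModuleCat.{u} Rᵐᵒᵖ)))

noncomputable abbrev LMod.ofFunctor : LMod k R A := ⟨F.obj RR, ρ, halg⟩

noncomputable def wattsUnit [F.Additive] (hρ : ∀ x : R, ρ x = F.map (mulMap R x)) :
    𝟭 _ ⟶ F ⋙ homFunctor (LMod.ofFunctor F ρ halg) where
  app M := ModuleCat.ofHom (X := M) (Y := (homFunctor (LMod.ofFunctor F ρ halg)).obj (F.obj M))
    { toFun m := F.map (ModuleCat.spanSingletonHom M m)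
      map_add' m n := (congrArg F.map (ModuleCat.spanSingletonHom_add M m n)).trans (F.map_add ..)
      map_smul' r m := by
        change _ = ρ r.unop ≫ _
        rw [hρ, ← F.map_comp, mulMap_comp_spanSingletonHom, op_unop] }
  naturality M N f := by
    ext m
    change F.map (ModuleCat.spanSingletonHom N (f m)) =
      F.map (ModuleCat.spanSingletonHom M m) ≫ F.map f
    rw [← F.map_comp, ModuleCat.spanSingletonHom_comp]

variable [F.Additive] (hρ : ∀ x : R, ρ x = F.map (mulMap R x))
  {T : ModuleCat.{u} Rᵐᵒᵖ ⥤ A} (adj : T ⊣ homFunctor (LMod.ofFunctor F ρ halg))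

noncomputable def wattsComparison : T ⟶ F :=
  Functor.whiskerRight (wattsUnit F ρ halg hρ) T ≫ Functor.whiskerLeft F adj.counit

lemma homEquiv_wattsComparison_app (M : ModuleCat.{u} Rᵐᵒᵖ) :
    adj.homEquiv M (F.obj M) ((wattsComparison F ρ halg hρ adj).app M) =
      (wattsUnit F ρ halg hρ).app M := by
  rw [← Equiv.eq_symm_apply, Adjunction.homEquiv_counit]
  rfl

lemma isIso_wattsComparison_app_self : IsIso ((wattsComparison F ρ halg hρ adj).app RR) := by
  refine isIso_of_coyoneda_map_bijective _ fun N => ?_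
  let e : (T.obj RR ⟶ N) ≃ (F.obj RR ⟶ N) :=
    (adj.homEquiv RR N).trans <|
      ModuleCat.homEquiv.trans (LinearMap.ringLmapEquivSelf Rᵐᵒᵖ ℕ _).toEquiv
  have he (α : F.obj RR ⟶ N) : e ((wattsComparison F ρ halg hρ adj).app RR ≫ α) = α := by
    change (adj.homEquiv RR N (_ ≫ α)) 1 = α
    rw [Adjunction.homEquiv_naturality_right, homEquiv_wattsComparison_app]
    change F.map (ModuleCat.spanSingletonHom RR 1) ≫ α = α
    rw [ModuleCat.spanSingletonHom_self_one, F.map_id, Category.id_comp]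
  have : (fun α => (wattsComparison F ρ halg hρ adj).app RR ≫ α) = e.symm :=
    funext fun α => (e.symm_apply_eq.2 (he α).symm).symm
  exact this ▸ e.symm.bijective

end Watts

/-- **Generalized Watts theorem (essential surjectivity).** Let `A` be a cocomplete
`k`-linear abelian category and `F : Mod R ⥤ A` a `k`-linear right exact functor
commuting with direct sums.  Let `𝓕 = F(R)` with left `R`-module structure
`ρ(x) = F(μ_x)`.  Then `F` is naturally isomorphic to `- ⊗_R 𝓕`, i.e. to any left
adjoint of `Hom_A(𝓕, -) : A ⥤ Mod R`. -/
theorem generalized_watts_ess_surj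
    (k : Type*) [CommRing k] (R : Type u) [Ring R] [Algebra k R]
    (A : Type*) [Category.{u} A] [Abelian A] [HasColimits A]
    [CategoryTheory.Linear k A]
    (F : ModuleCat.{u} Rᵐᵒᵖ ⥤ A) [F.Additive] [F.Linear k]
    [PreservesFiniteColimits F]
    [∀ ι : Type u, PreservesColimitsOfShape (Discrete ι) F]
    (ρ : R →+* End (F.obj (RR : ModuleCat.{u} Rᵐᵒᵖ)))
    (hρ : ∀ x : R, ρ x = F.map (mulMap R x))
    (halg : ∀ a : k, ρ (algebraMap k R a) = a • 𝟙 (F.obj (RR : ModuleCat.{u} Rᵐᵒᵖ)))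
    (T : ModuleCat.{u} Rᵐᵒᵖ ⥤ A)
    (adj : T ⊣ homFunctor (⟨F.obj RR, ρ, halg⟩ : LMod k R A)) :
    Nonempty (F ≅ T) := by
  have := adj.leftAdjoint_preservesColimits
  have := isIso_wattsComparison_app_self F ρ halg hρ adj
  have := ModuleCat.isIso_natTrans_of_isIso_app_self (wattsComparison F ρ halg hρ adj)
  exact ⟨(asIso (wattsComparison F ρ halg hρ adj)).symm⟩
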